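/- Let k₁, …, kₙ be positive integers with k₁ + ⋯ + kₙ = 2k. Consider the incomplete weighted profile P over candidates {A, B, C} consisting of: one agent of weight 1 with total order B > C > A; one agent of weight 2k−1 with total order B > A > C; one agent of weight 2k−1 with total order C > B > A; and, for each i, one agent of weight 2kᵢ whose partial order declares only A > B. Then B is a weak possible winner of P (i.e., B ∈ WP(P)) if and only if the multiset {k₁, …, kₙ} can be partitioned into two parts each summing to k. -/

import Mathlib

open scoped Classical

/-- An agenda: a binary tree whose leaves are labelled with candidates. -/
inductive Agenda (α : Type) : Type
  | leaf (a : α) : Agenda α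
  | node (l r : Agenda α) : Agenda α

namespace Agenda

/-- The list of leaf labels of an agenda. -/
def leaves {α : Type} : Agenda α → List α
  | leaf a => [a]
  | node l r => leaves l ++ leaves r

/-- The list of depths of the leaves of an agenda. -/
def depths {α : Type} : Agenda α → List ℕ
  | leaf _ => [0]
  | node l r => (depths l ++ depths r).map (· + 1)

end Agenda

/-- A valid agenda: leaves labelled bijectively with the candidates. -/
def IsAgenda {α : Type} [Fintype α] (t : Agenda α) : Prop :=
  t.leaves.Nodup ∧ ∀ a : α, a ∈ t.leaves

/-- A balanced agenda: max and min leaf depths differ by at most 1. -/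
def IsBalanced {α : Type} (t : Agenda α) : Prop :=
  ∀ d₁ ∈ t.depths, ∀ d₂ ∈ t.depths, d₁ ≤ d₂ + 1

/-- A tournament: complete asymmetric directed graph on the candidates. -/
def IsTournament {α : Type} (T : α → α → Prop) : Prop :=
  (∀ a, ¬ T a a) ∧ ∀ a b : α, a ≠ b → (T a b ↔ ¬ T b a)

/-- Winner of an agenda under a tournament: each internal node is won by
whichever child's winner beats the other; the root's candidate wins. -/
noncomputable def winner {α : Type} (T : α → α → Prop) : Agenda α → α
  | .leaf a => a
  | .node l r => if T (winner T l) (winner T r) then winner T l else winner T r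

/-- Strict partial order: asymmetric and transitive. -/
def IsSPO {α : Type} (r : α → α → Prop) : Prop :=
  (∀ a b, r a b → ¬ r b a) ∧ (∀ a b c, r a b → r b c → r a c)

/-- Strict total order. -/
def IsSTO {α : Type} (r : α → α → Prop) : Prop :=
  IsSPO r ∧ ∀ a b : α, a ≠ b → r a b ∨ r b a

/-- An (incomplete) weighted profile: a finite sequence of agents, each with a
positive weight and a strict partial order, the sum of weights being odd. -/
structure Profile (α : Type) where
  agents : List (ℕ × (α → α → Prop))
  pos : ∀ p ∈ agents, 0 < p.1
  spo : ∀ p ∈ agents, IsSPO p.2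
  oddSum : Odd (agents.map Prod.fst).sum

/-- Total weight of agents preferring `a` to `b`. -/
noncomputable def prefWeight {α : Type} (P : Profile α) (a b : α) : ℕ :=
  (P.agents.map (fun p => if p.2 a b then p.1 else 0)).sum

/-- The majority graph of a profile. -/
def maj {α : Type} (P : Profile α) (a b : α) : Prop :=
  prefWeight P b a < prefWeight P a b

/-- `Q` is a completion of `P`: same weights, each agent's partial order is
replaced by a strict total order extending it. -/
def IsCompletion {α : Type} (P Q : Profile α) : Prop :=
  List.Forall₂ (fun p q => p.1 = q.1 ∧ IsSTO q.2 ∧ ∀ a b, p.2 a b → q.2 a b)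
    P.agents Q.agents

/-- `T` extends the (incomplete majority) graph `G`. -/
def Extends {α : Type} (G T : α → α → Prop) : Prop := ∀ a b, G a b → T a b

/-- `A` wins some agenda under `T`. -/
def WinsSome {α : Type} [Fintype α] (T : α → α → Prop) (A : α) : Prop :=
  ∃ t : Agenda α, IsAgenda t ∧ winner T t = A

/-- `A` wins every agenda under `T`. -/
def WinsAll {α : Type} [Fintype α] (T : α → α → Prop) (A : α) : Prop :=
  ∀ t : Agenda α, IsAgenda t → winner T t = A

/-- `A` wins some balanced agenda under `T`. -/
def FWinsSome {α : Type} [Fintype α] (T : α → α → Prop) (A : α) : Prop :=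
  ∃ t : Agenda α, IsAgenda t ∧ IsBalanced t ∧ winner T t = A

/-- `A` wins every balanced agenda under `T`. -/
def FWinsAll {α : Type} [Fintype α] (T : α → α → Prop) (A : α) : Prop :=
  ∀ t : Agenda α, IsAgenda t → IsBalanced t → winner T t = A

/-- Weak possible winner of a profile. -/
def WPp {α : Type} [Fintype α] (P : Profile α) (A : α) : Prop :=
  ∃ Q : Profile α, IsCompletion P Q ∧ WinsSome (maj Q) A

/-- Strong possible winner of a profile. -/
def SPp {α : Type} [Fintype α] (P : Profile α) (A : α) : Prop :=
  ∀ Q : Profile α, IsCompletion P Q → WinsSome (maj Q) A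

/-- Weak Condorcet winner of a profile. -/
def WCp {α : Type} [Fintype α] (P : Profile α) (A : α) : Prop :=
  ∃ Q : Profile α, IsCompletion P Q ∧ WinsAll (maj Q) A

/-- Strong Condorcet winner of a profile. -/
def SCp {α : Type} [Fintype α] (P : Profile α) (A : α) : Prop :=
  ∀ Q : Profile α, IsCompletion P Q → WinsAll (maj Q) A

/-- Weak possible winner of an incomplete majority graph. -/
def WPg {α : Type} [Fintype α] (G : α → α → Prop) (A : α) : Prop :=
  ∃ T : α → α → Prop, IsTournament T ∧ Extends G T ∧ WinsSome T A

/-- Strong possible winner of an incomplete majority graph. -/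
def SPg {α : Type} [Fintype α] (G : α → α → Prop) (A : α) : Prop :=
  ∀ T : α → α → Prop, IsTournament T → Extends G T → WinsSome T A

/-- Weak Condorcet winner of an incomplete majority graph. -/
def WCg {α : Type} [Fintype α] (G : α → α → Prop) (A : α) : Prop :=
  ∃ T : α → α → Prop, IsTournament T ∧ Extends G T ∧ WinsAll T A

/-- Strong Condorcet winner of an incomplete majority graph. -/
def SCg {α : Type} [Fintype α] (G : α → α → Prop) (A : α) : Prop :=
  ∀ T : α → α → Prop, IsTournament T → Extends G T → WinsAll T A

/-- A profile is unweighted if every agent has weight 1. -/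
def IsUnweighted {α : Type} (P : Profile α) : Prop :=
  ∀ p ∈ P.agents, p.1 = 1

/-- `Q` is the unweighted profile corresponding to `P`: each agent of
weight `k` is replaced by `k` agents of weight 1 with the same order. -/
def IsUnwVersion {α : Type} (P Q : Profile α) : Prop :=
  Q.agents = P.agents.flatMap (fun p => List.replicate p.1 (1, p.2))

/-- Fair strong Condorcet winner of a profile (balanced agendas only). -/
def FSCp {α : Type} [Fintype α] (P : Profile α) (A : α) : Prop :=
  ∀ Q : Profile α, IsCompletion P Q → FWinsAll (maj Q) A

/-- Fair weak Condorcet winner of a profile (balanced agendas only). -/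
def FWCp {α : Type} [Fintype α] (P : Profile α) (A : α) : Prop :=
  ∃ Q : Profile α, IsCompletion P Q ∧ FWinsAll (maj Q) A

/-- Fair weak possible winner of a profile (balanced agendas only). -/
def FWPp {α : Type} [Fintype α] (P : Profile α) (A : α) : Prop :=
  ∃ Q : Profile α, IsCompletion P Q ∧ FWinsSome (maj Q) A

/-- The three candidates. -/
inductive Cand : Type
  | A | B | C
deriving DecidableEq

instance : Fintype Cand :=
  ⟨{Cand.A, Cand.B, Cand.C}, by intro x; cases x <;> simp⟩

/-- The strict total order `B > C > A` ("x is preferred to y"). -/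
def ordBCA : Cand → Cand → Prop :=
  fun x y => (match x with | .B => 0 | .C => 1 | .A => 2) <
             (match y with | .B => 0 | .C => 1 | .A => (2:ℕ))

/-- The strict total order `B > A > C`. -/
def ordBAC : Cand → Cand → Prop :=
  fun x y => (match x with | .B => 0 | .A => 1 | .C => 2) <
             (match y with | .B => 0 | .A => 1 | .C => (2:ℕ))

/-- The strict total order `C > B > A`. -/
def ordCBA : Cand → Cand → Prop :=
  fun x y => (match x with | .C => 0 | .B => 1 | .A => 2) <
             (match y with | .C => 0 | .B => 1 | .A => (2:ℕ))

/-- The incomplete preference declaring only `A > B`. -/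
def onlyAB : Cand → Cand → Prop := fun x y => x = Cand.A ∧ y = Cand.B

/-- The profile of the reduction: one agent of weight `1` voting `B>C>A`,
one of weight `2k-1` voting `B>A>C`, one of weight `2k-1` voting `C>B>A`,
and for each `kᵢ` in `ks` one agent of weight `2kᵢ` declaring only `A>B`. -/
def P17 (ks : List ℕ) (k : ℕ) (hk : 0 < k) (hpos : ∀ x ∈ ks, 0 < x)
    (hsum : ks.sum = 2 * k) : Profile Cand where
  agents :=
    (1, ordBCA) :: (2 * k - 1, ordBAC) :: (2 * k - 1, ordCBA) ::
      ks.map (fun ki => (2 * ki, onlyAB))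
  pos := by
    intro p hp
    simp only [List.mem_cons, List.mem_map] at hp
    rcases hp with rfl | rfl | rfl | ⟨ki, hki, rfl⟩
    · norm_num
    · simp only; omega
    · simp only; omega
    · have := hpos ki hki; simp only; omega
  spo := by
    intro p hp
    simp only [List.mem_cons, List.mem_map] at hp
    rcases hp with rfl | rfl | rfl | ⟨ki, hki, rfl⟩
    · exact ⟨fun a b h h' => absurd h' (Nat.lt_asymm h),
        fun a b c h h' => Nat.lt_trans h h'⟩
    · exact ⟨fun a b h h' => absurd h' (Nat.lt_asymm h),
        fun a b c h h' => Nat.lt_trans h h'⟩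
    · exact ⟨fun a b h h' => absurd h' (Nat.lt_asymm h),
        fun a b c h h' => Nat.lt_trans h h'⟩
    · constructor
      · rintro a b ⟨rfl, rfl⟩ ⟨h, -⟩; cases h
      · rintro a b c ⟨rfl, rfl⟩ ⟨h, -⟩; cases h
  oddSum := by
    have hmap : ∀ l : List ℕ,
        ((l.map (fun ki => ((2 * ki : ℕ), onlyAB))).map Prod.fst).sum
          = 2 * l.sum := by
      intro l
      rw [List.map_map]
      induction l with
      | nil => simp
      | cons a t ih => simp_all [Function.comp, Nat.mul_add]
    refine ⟨4 * k - 1, ?_⟩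
    simp only [List.map_cons, List.sum_cons]
    rw [hmap ks, hsum]
    omega

/-!
In every completion the three fixed voters keep their orders, and each voter of weight `2kᵢ`
picks a total order with `A > B`. So `A` beats `B` by `4k` to `4k - 1`, and `B` wins some agenda
iff `B` beats `C` and `C` beats `A`. If `S` is the weight of the flexible voters ranking `B` above
`C`, then `B` beats `C` iff `S ≥ 2k`, while `C` beats `A` needs weight at least `2k` of flexible
voters with `C > A > B`, forcing `S ≤ 2k`. Hence `S = 2k`: the `kᵢ` of the voters with `B > C`
sum to `k`. Conversely, given a partition, one part votes `A > B > C` and the other `C > A > B`.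
-/

section Weights

variable {α : Type}

noncomputable def listPrefWeight (l : List (ℕ × (α → α → Prop))) (a b : α) : ℕ :=
  (l.map fun p => if p.2 a b then p.1 else 0).sum

theorem prefWeight_eq_listPrefWeight (P : Profile α) (a b : α) :
    prefWeight P a b = listPrefWeight P.agents a b := rfl

@[simp]
theorem listPrefWeight_nil (a b : α) : listPrefWeight [] a b = 0 := rfl

@[simp]
theorem listPrefWeight_cons (p : ℕ × (α → α → Prop)) (l : List (ℕ × (α → α → Prop)))
    (a b : α) :
    listPrefWeight (p :: l) a b = (if p.2 a b then p.1 else 0) + listPrefWeight l a b := by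
  simp [listPrefWeight]

@[simp]
theorem listPrefWeight_append (l₁ l₂ : List (ℕ × (α → α → Prop))) (a b : α) :
    listPrefWeight (l₁ ++ l₂) a b = listPrefWeight l₁ a b + listPrefWeight l₂ a b := by
  simp [listPrefWeight]

theorem List.Perm.listPrefWeight_eq {l₁ l₂ : List (ℕ × (α → α → Prop))} (h : l₁.Perm l₂)
    (a b : α) : listPrefWeight l₁ a b = listPrefWeight l₂ a b :=
  (h.map _).sum_eq

theorem listPrefWeight_map_const {ι : Type} (l : List ι) (w : ι → ℕ) (r : α → α → Prop)
    (a b : α) :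
    listPrefWeight (l.map fun i => (w i, r)) a b = if r a b then (l.map w).sum else 0 := by
  induction l with
  | nil => simp
  | cons i l ih => split_ifs at ih ⊢ <;> simp_all

theorem listPrefWeight_eq_sum {l : List (ℕ × (α → α → Prop))} {a b : α}
    (h : ∀ p ∈ l, p.2 a b) : listPrefWeight l a b = (l.map Prod.fst).sum := by
  unfold listPrefWeight
  congr 1
  exact List.map_congr_left fun p hp => if_pos (h p hp)

theorem listPrefWeight_le_listPrefWeight {l : List (ℕ × (α → α → Prop))} {a b c d : α}
    (h : ∀ p ∈ l, p.2 a b → p.2 c d) : listPrefWeight l a b ≤ listPrefWeight l c d := by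
  unfold listPrefWeight
  refine List.sum_le_sum fun p hp => ?_
  split_ifs with hab hcd hcd
  · exact le_rfl
  · exact absurd (h p hp hab) hcd
  · exact Nat.zero_le _
  · exact le_rfl

theorem listPrefWeight_add_listPrefWeight {l : List (ℕ × (α → α → Prop))}
    (hl : ∀ p ∈ l, IsSTO p.2) {a b : α} (hab : a ≠ b) :
    listPrefWeight l a b + listPrefWeight l b a = (l.map Prod.fst).sum := by
  induction l with
  | nil => rfl
  | cons p l ih =>
    have hp := hl p List.mem_cons_self
    have ih := ih fun q hq => hl q (List.mem_cons_of_mem p hq)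
    rcases hp.2 a b hab with h | h
    · simp only [listPrefWeight_cons, List.map_cons, List.sum_cons, if_pos h,
        if_neg (hp.1.1 a b h)]
      omega
    · simp only [listPrefWeight_cons, List.map_cons, List.sum_cons, if_pos h,
        if_neg (hp.1.1 b a h)]
      omega

/-- Splits `ks` according to whether the agent matched with each `k` prefers `a` to `b`. -/
theorem exists_perm_append_listPrefWeight_eq {ι : Type} {f : ι → ℕ} (a b : α) :
    ∀ {ks : List ι} {qs : List (ℕ × (α → α → Prop))},
      List.Forall₂ (fun k q => q.1 = f k) ks qs →
      ∃ l₁ l₂ : List ι, ks.Perm (l₁ ++ l₂) ∧ listPrefWeight qs a b = (l₁.map f).sum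
  | [], [], .nil => ⟨[], [], List.Perm.nil, rfl⟩
  | k :: _, q :: _, .cons hq h => by
    obtain ⟨l₁, l₂, hperm, hw⟩ := exists_perm_append_listPrefWeight_eq a b h
    by_cases hab : q.2 a b
    · exact ⟨k :: l₁, l₂, hperm.cons k, by simp [hab, hq, hw]⟩
    · exact ⟨l₁, k :: l₂, (hperm.cons k).trans List.perm_middle.symm, by simp [hab, hw]⟩

end Weights

section Completions

variable {α : Type}

def CompletesAgent (p q : ℕ × (α → α → Prop)) : Prop :=
  p.1 = q.1 ∧ IsSTO q.2 ∧ ∀ a b, p.2 a b → q.2 a b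

theorem List.Forall₂.exists_eq_append {β : Type} {R : α → β → Prop} {l₁ l₂ : List α}
    {u : List β} (h : List.Forall₂ R (l₁ ++ l₂) u) :
    ∃ u₁ u₂, u = u₁ ++ u₂ ∧ List.Forall₂ R l₁ u₁ ∧ List.Forall₂ R l₂ u₂ :=
  ⟨u.take l₁.length, u.drop l₁.length, (List.take_append_drop _ _).symm,
    by simpa using List.forall₂_take l₁.length h, by simpa using List.forall₂_drop l₁.length h⟩

theorem IsSTO.eq_of_le {r s : α → α → Prop} (hr : IsSTO r) (hs : IsSPO s)
    (hrs : ∀ a b, r a b → s a b) : s = r := by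
  funext a b
  refine propext ⟨fun h => ?_, hrs a b⟩
  have hab : a ≠ b := by
    rintro rfl
    exact hs.1 a a h h
  exact (hr.2 a b hab).resolve_right fun hba => hs.1 a b h (hrs b a hba)

theorem eq_of_forall₂_completesAgent {l u : List (ℕ × (α → α → Prop))}
    (h : List.Forall₂ CompletesAgent l u) (hl : ∀ p ∈ l, IsSTO p.2) : u = l := by
  induction h with
  | nil => rfl
  | @cons p q l u hpq _ ih =>
    obtain ⟨hw, hsto, hext⟩ := hpq
    rw [ih fun p hp => hl p (List.mem_cons_of_mem _ hp)]
    exact congrArg (· :: l) (Prod.ext hw.symm ((hl p List.mem_cons_self).eq_of_le hsto.1 hext))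

theorem forall₂_completesAgent_self {l : List (ℕ × (α → α → Prop))}
    (hl : ∀ p ∈ l, IsSTO p.2) : List.Forall₂ CompletesAgent l l :=
  List.forall₂_same.mpr fun p hp => ⟨rfl, hl p hp, fun _ _ h => h⟩

theorem map_fst_eq_of_forall₂_completesAgent {l u : List (ℕ × (α → α → Prop))}
    (h : List.Forall₂ CompletesAgent l u) : u.map Prod.fst = l.map Prod.fst := by
  induction h with
  | nil => rfl
  | cons hpq _ ih => simp [ih, hpq.1]

theorem isSTO_of_forall₂_completesAgent {l u : List (ℕ × (α → α → Prop))}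
    (h : List.Forall₂ CompletesAgent l u) : ∀ q ∈ u, IsSTO q.2 := by
  induction h with
  | nil => simp
  | cons hpq _ ih =>
    rintro q (_ | ⟨_, hq⟩)
    exacts [hpq.2.1, ih q hq]

theorem exists_isCompletion_of_forall₂ (P : Profile α) {u : List (ℕ × (α → α → Prop))}
    (h : List.Forall₂ CompletesAgent P.agents u) :
    ∃ Q : Profile α, Q.agents = u ∧ IsCompletion P Q := by
  have hw := map_fst_eq_of_forall₂_completesAgent h
  refine ⟨⟨u, fun q hq => ?_, fun q hq => ?_, hw ▸ P.oddSum⟩, rfl, h⟩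
  · have : q.1 ∈ P.agents.map Prod.fst := hw ▸ List.mem_map_of_mem hq
    obtain ⟨p, hp, hpq⟩ := List.mem_map.mp this
    exact hpq ▸ P.pos p hp
  · exact (isSTO_of_forall₂_completesAgent h q hq).1

/-- Odd total weight rules out ties. -/
theorem maj_or_maj {Q : Profile α} (hQ : ∀ q ∈ Q.agents, IsSTO q.2) {a b : α} (hab : a ≠ b) :
    maj Q a b ∨ maj Q b a := by
  have hsum := listPrefWeight_add_listPrefWeight hQ hab
  obtain ⟨m, hm⟩ := Q.oddSum
  simp only [maj, prefWeight_eq_listPrefWeight]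
  omega

end Completions

section Agendas

variable {α : Type} {T : α → α → Prop}

theorem winner_eq_of_beats_all (hT : ∀ a b, T a b → ¬ T b a) {w : α}
    (hw : ∀ x, x ≠ w → T w x) : ∀ {t : Agenda α}, w ∈ t.leaves → winner T t = w
  | .leaf _, h => (List.mem_singleton.mp h).symm
  | .node l r, h => by
    rw [Agenda.leaves, List.mem_append] at h
    rw [winner]
    rcases h with h | h
    · rw [winner_eq_of_beats_all hT hw h]
      split_ifs with hwr
      · rfl
      · by_contra hne
        exact hwr (hw _ hne)
    · rw [winner_eq_of_beats_all hT hw h]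
      split_ifs with hlw
      · by_contra hne
        exact hT _ _ hlw (hw _ hne)
      · rfl

theorem winner_ne_of_beaten_by_all (hT : ∀ a b, T a b → ¬ T b a) {w x : α}
    (hw : ∀ y, y ≠ w → T y w) (hxw : x ≠ w) : ∀ {t : Agenda α}, x ∈ t.leaves → winner T t ≠ w
  | .leaf _, h => by rwa [← List.mem_singleton.mp h]
  | .node l r, h => by
    rw [Agenda.leaves, List.mem_append] at h
    rw [winner]
    rcases h with h | h
    · have hl := winner_ne_of_beaten_by_all hT hw hxw h
      split_ifs with hlr
      · exact hl
      · rintro rfl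
        exact hlr (hw _ hl)
    · have hr := winner_ne_of_beaten_by_all hT hw hxw h
      split_ifs with hlr
      · rintro rfl
        exact hT _ _ hlr (hw _ hr)
      · exact hr

end Agendas

theorem winsSome_B_iff {T : Cand → Cand → Prop} (hT : ∀ a b, T a b → ¬ T b a)
    (htot : ∀ a b, a ≠ b → T a b ∨ T b a) (hAB : T .A .B) :
    WinsSome T .B ↔ T .B .C ∧ T .C .A := by
  constructor
  · rintro ⟨t, ⟨-, hleaves⟩, hwin⟩
    have hBC : T .B .C := by
      by_contra hBC
      have hCB := (htot .B .C (by decide)).resolve_left hBC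
      have hloser : ∀ y, y ≠ Cand.B → T y .B := by
        rintro (_ | _ | _) hy
        exacts [hAB, absurd rfl hy, hCB]
      exact winner_ne_of_beaten_by_all hT hloser (by decide) (hleaves .A) hwin
    refine ⟨hBC, ?_⟩
    by_contra hCA
    have hAC := (htot .C .A (by decide)).resolve_left hCA
    have hcondorcet : ∀ x, x ≠ Cand.A → T .A x := by
      rintro (_ | _ | _) hx
      exacts [absurd rfl hx, hAB, hAC]
    have := winner_eq_of_beats_all hT hcondorcet (hleaves .A)
    rw [hwin] at this
    cases this
  · rintro ⟨hBC, hCA⟩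
    refine ⟨.node (.node (.leaf .A) (.leaf .C)) (.leaf .B), ⟨by decide, by decide⟩, ?_⟩
    simp [winner, hT _ _ hCA, hT _ _ hBC]

section Reduction

def ordABC : Cand → Cand → Prop :=
  fun x y => (match x with | .A => 0 | .B => 1 | .C => 2) <
             (match y with | .A => 0 | .B => 1 | .C => (2:ℕ))

def ordCAB : Cand → Cand → Prop :=
  fun x y => (match x with | .C => 0 | .A => 1 | .B => 2) <
             (match y with | .C => 0 | .A => 1 | .B => (2:ℕ))

def fixedAgents (k : ℕ) : List (ℕ × (Cand → Cand → Prop)) :=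
  [(1, ordBCA), (2 * k - 1, ordBAC), (2 * k - 1, ordCBA)]

def abAgents (ks : List ℕ) : List (ℕ × (Cand → Cand → Prop)) :=
  ks.map fun ki => (2 * ki, onlyAB)

theorem isSTO_fixedAgents (k : ℕ) : ∀ p ∈ fixedAgents k, IsSTO p.2 := by
  simp only [fixedAgents, List.mem_cons, List.not_mem_nil, or_false, forall_eq_or_imp,
    forall_eq, IsSTO, IsSPO, ordBCA, ordBAC, ordCBA]
  decide

theorem isSTO_ordABC : IsSTO ordABC := by
  unfold IsSTO IsSPO ordABC
  decide

theorem isSTO_ordCAB : IsSTO ordCAB := by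
  unfold IsSTO IsSPO ordCAB
  decide

theorem sum_map_two_mul (l : List ℕ) : (l.map (2 * ·)).sum = 2 * l.sum := by
  simpa using List.sum_map_mul_left (l := l) (r := 2) (f := id)

variable {ks : List ℕ} {k : ℕ} {qs : List (ℕ × (Cand → Cand → Prop))}

theorem sum_map_fst_of_forall₂_abAgents (h : List.Forall₂ CompletesAgent (abAgents ks) qs) :
    (qs.map Prod.fst).sum = 2 * ks.sum := by
  rw [map_fst_eq_of_forall₂_completesAgent h, abAgents, List.map_map, ← sum_map_two_mul]
  rfl

theorem prefers_A_B_of_forall₂_abAgents (h : List.Forall₂ CompletesAgent (abAgents ks) qs) :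
    ∀ q ∈ qs, q.2 .A .B := by
  induction ks generalizing qs with
  | nil => simp_all [abAgents]
  | cons ki ks ih =>
    rw [abAgents, List.map_cons] at h
    obtain ⟨q, qs', ⟨-, -, hext⟩, hrest, rfl⟩ := List.forall₂_cons_left_iff.mp h
    rintro q' (_ | ⟨_, hq'⟩)
    exacts [hext _ _ ⟨rfl, rfl⟩, ih hrest q' hq']

theorem forall₂_abAgents_map {r : Cand → Cand → Prop} (hr : IsSTO r) (hAB : r .A .B)
    (l : List ℕ) : List.Forall₂ CompletesAgent (abAgents l) (l.map fun ki => (2 * ki, r)) :=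
  List.forall₂_map_left_iff.mpr (List.forall₂_map_right_iff.mpr
    (List.forall₂_same.mpr fun _ _ => ⟨rfl, hr, by rintro _ _ ⟨rfl, rfl⟩; exact hAB⟩))

theorem maj_of_agents_eq_fixedAgents_append (hk : 0 < k) (hsum : ks.sum = 2 * k)
    (hqs : List.Forall₂ CompletesAgent (abAgents ks) qs) {Q : Profile Cand}
    (hQ : Q.agents = fixedAgents k ++ qs) :
    maj Q .A .B ∧
      (maj Q .B .C ↔ listPrefWeight qs .C .B ≤ listPrefWeight qs .B .C) ∧
      (maj Q .C .A ↔ listPrefWeight qs .A .C ≤ listPrefWeight qs .C .A) := by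
  have htotal := sum_map_fst_of_forall₂_abAgents hqs
  have hAB := listPrefWeight_eq_sum (prefers_A_B_of_forall₂_abAgents hqs)
  have hBA := listPrefWeight_add_listPrefWeight (isSTO_of_forall₂_completesAgent hqs)
    (by decide : Cand.A ≠ .B)
  simp only [maj, prefWeight_eq_listPrefWeight, hQ, listPrefWeight_append]
  simp [fixedAgents, ordBCA, ordBAC, ordCBA]
  omega

/-- The three fixed agents are already complete, so only the completion `qs` of the agents
declaring `A > B` matters. -/
theorem wpp_P17_iff (hk : 0 < k) (hpos : ∀ x ∈ ks, 0 < x) (hsum : ks.sum = 2 * k) :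
    WPp (P17 ks k hk hpos hsum) .B ↔
      ∃ qs, List.Forall₂ CompletesAgent (abAgents ks) qs ∧
        listPrefWeight qs .C .B ≤ listPrefWeight qs .B .C ∧
        listPrefWeight qs .A .C ≤ listPrefWeight qs .C .A := by
  have winsSome_iff {Q : Profile Cand} {qs} (hQ : IsCompletion (P17 ks k hk hpos hsum) Q)
      (hqs : List.Forall₂ CompletesAgent (abAgents ks) qs)
      (hagents : Q.agents = fixedAgents k ++ qs) :
      WinsSome (maj Q) .B ↔ listPrefWeight qs .C .B ≤ listPrefWeight qs .B .C ∧
        listPrefWeight qs .A .C ≤ listPrefWeight qs .C .A := by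
    obtain ⟨hAB, hBC, hCA⟩ := maj_of_agents_eq_fixedAgents_append hk hsum hqs hagents
    rw [winsSome_B_iff (T := maj Q) (fun _ _ => lt_asymm)
      (fun _ _ => maj_or_maj (isSTO_of_forall₂_completesAgent hQ)) hAB, hBC, hCA]
  constructor
  · rintro ⟨Q, hQ, hwin⟩
    obtain ⟨u, qs, hagents, hu, hqs⟩ :=
      List.Forall₂.exists_eq_append (l₁ := fixedAgents k) (l₂ := abAgents ks) hQ
    rw [eq_of_forall₂_completesAgent hu (isSTO_fixedAgents k)] at hagents
    exact ⟨qs, hqs, (winsSome_iff hQ hqs hagents).mp hwin⟩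
  · rintro ⟨qs, hqs, hweights⟩
    obtain ⟨Q, hagents, hQ⟩ := exists_isCompletion_of_forall₂ (P17 ks k hk hpos hsum)
      (List.rel_append (forall₂_completesAgent_self (isSTO_fixedAgents k)) hqs)
    exact ⟨Q, hQ, (winsSome_iff hQ hqs hagents).mpr hweights⟩

theorem exists_partition_of_forall₂_abAgents (hsum : ks.sum = 2 * k)
    (hqs : List.Forall₂ CompletesAgent (abAgents ks) qs)
    (hBC : listPrefWeight qs .C .B ≤ listPrefWeight qs .B .C)
    (hCA : listPrefWeight qs .A .C ≤ listPrefWeight qs .C .A) :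
    ∃ l₁ l₂ : List ℕ, ks.Perm (l₁ ++ l₂) ∧ l₁.sum = k ∧ l₂.sum = k := by
  have hweights : List.Forall₂ (fun ki q => q.1 = 2 * ki) ks qs :=
    (List.forall₂_map_left_iff.mp hqs).imp fun _ _ h => h.1.symm
  obtain ⟨l₁, l₂, hperm, hBC_l₁⟩ := exists_perm_append_listPrefWeight_eq .B .C hweights
  rw [sum_map_two_mul] at hBC_l₁
  have hsplit : l₁.sum + l₂.sum = 2 * k := by rw [← List.sum_append, ← hperm.sum_eq, hsum]
  have htotal := sum_map_fst_of_forall₂_abAgents hqs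
  have hsto := isSTO_of_forall₂_completesAgent hqs
  have hBC_CB := listPrefWeight_add_listPrefWeight hsto (by decide : Cand.B ≠ .C)
  have hCA_AC := listPrefWeight_add_listPrefWeight hsto (by decide : Cand.C ≠ .A)
  -- an agent with `C > A` also has `C > B`, because `A > B`
  have hCA_CB : listPrefWeight qs .C .A ≤ listPrefWeight qs .C .B :=
    listPrefWeight_le_listPrefWeight fun q hq hCA =>
      (hsto q hq).1.2 _ _ _ hCA (prefers_A_B_of_forall₂_abAgents hqs q hq)
  exact ⟨l₁, l₂, hperm, by omega, by omega⟩

/-- The members of `l₁` vote `A > B > C` and those of `l₂` vote `C > A > B`. -/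
theorem exists_forall₂_abAgents_of_partition {l₁ l₂ : List ℕ} (hperm : ks.Perm (l₁ ++ l₂))
    (hl₁ : l₁.sum = k) (hl₂ : l₂.sum = k) :
    ∃ qs, List.Forall₂ CompletesAgent (abAgents ks) qs ∧
      listPrefWeight qs .C .B ≤ listPrefWeight qs .B .C ∧
      listPrefWeight qs .A .C ≤ listPrefWeight qs .C .A := by
  have hcomplete : List.Forall₂ CompletesAgent (abAgents (l₁ ++ l₂))
      (l₁.map (fun ki => (2 * ki, ordABC)) ++ l₂.map (fun ki => (2 * ki, ordCAB))) := by
    rw [abAgents, List.map_append]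
    exact List.rel_append (forall₂_abAgents_map isSTO_ordABC (by simp [ordABC]) l₁)
      (forall₂_abAgents_map isSTO_ordCAB (by simp [ordCAB]) l₂)
  obtain ⟨qs, hqs, hqs_perm⟩ := List.perm_comp_forall₂ (hperm.map _) hcomplete
  refine ⟨qs, hqs, ?_⟩
  simp only [hqs_perm.listPrefWeight_eq, listPrefWeight_append, listPrefWeight_map_const]
  simp [ordABC, ordCAB, sum_map_two_mul, hl₁, hl₂]

end Reduction

/-- `B` is a weak possible winner of the reduction profile
iff the multiset `ks` can be partitioned into two parts each summing to `k`. -/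
theorem stmt17 (ks : List ℕ) (k : ℕ) (hk : 0 < k) (hpos : ∀ x ∈ ks, 0 < x)
    (hsum : ks.sum = 2 * k) :
    WPp (P17 ks k hk hpos hsum) Cand.B ↔
      ∃ l₁ l₂ : List ℕ, ks.Perm (l₁ ++ l₂) ∧ l₁.sum = k ∧ l₂.sum = k := by
  rw [wpp_P17_iff hk hpos hsum]
  constructor
  · rintro ⟨qs, hqs, hBC, hCA⟩
    exact exists_partition_of_forall₂_abAgents hsum hqs hBC hCA
  · rintro ⟨l₁, l₂, hperm, hl₁, hl₂⟩
    exact exists_forall₂_abAgents_of_partition hperm hl₁ hl₂
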